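/- arXiv:2410.23798 — 2 statements merged into one kernel-verified Lean document; each statement's English description precedes it below -/
import Mathlib

section
/- For all ν > 0, M > 0, γ₀ > 0, γ₁ ∈ (0,1], γ₂ ∈ (0,1), and t ≥ 0, the shear flow b(t,·) satisfies: (i) b(t,·) is odd in y; (ii) ∂_y² b(t,y) = −2yγ₀²M·[ (4νt+γ₀²)^{−3/2}·exp(−y²/(4νt+γ₀²)) − γ₂γ₁³·(4νt+γ₀²γ₁²)^{−3/2}·exp(−y²/(4νt+γ₀²γ₁²)) ]; (iii) b(t,y) > 0 and ∂_y² b(t,y) < 0 for every y > 0; consequently y = 0 is the only inflection point of b(t,·), and ∂_y² b(t,y)/b(t,y) < 0 for every y ≠ 0. -/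
open MeasureTheory Real Filter Set

noncomputable section

/-- The shear flow `b(t,y)` from the paper (eq. (1.6)/(2.1)):
`b(t,y) = y + M·(∫₀^y (γ₀²/√(4νt+γ₀²))·exp(−z²/(4νt+γ₀²)) dz
  − γ₂·∫₀^y (γ₀²γ₁³/√(4νt+γ₀²γ₁²))·exp(−z²/(4νt+γ₀²γ₁²)) dz)`. -/
def shearFlow (ν M γ₀ γ₁ γ₂ : ℝ) (t y : ℝ) : ℝ :=
  y + M * ((∫ z in (0:ℝ)..y, γ₀^2 / Real.sqrt (4*ν*t + γ₀^2) * Real.exp (-z^2 / (4*ν*t + γ₀^2)))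
    - γ₂ * ∫ z in (0:ℝ)..y, γ₀^2 * γ₁^3 / Real.sqrt (4*ν*t + γ₀^2*γ₁^2) *
        Real.exp (-z^2 / (4*ν*t + γ₀^2*γ₁^2)))

/-- The potential `q = b''/b`, extended continuously at `y = 0`
(where `b(0) = b''(0) = 0`). -/
def qExt (b : ℝ → ℝ) : ℝ → ℝ := fun y =>
  if y = 0 then limUnder (nhdsWithin 0 {(0:ℝ)}ᶜ) (fun z => deriv (deriv b) z / b z)
  else deriv (deriv b) y / b y

/-- The set of Rayleigh quotients `∫|φ'|² + ∫ (b''/b)·φ²` over normalized `φ ∈ H¹(ℝ)`. -/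
def lambdaSet (b : ℝ → ℝ) : Set ℝ :=
  { E | ∃ φ : ℝ → ℝ, Differentiable ℝ φ ∧ MemLp φ 2 (volume : Measure ℝ) ∧
      MemLp (deriv φ) 2 (volume : Measure ℝ) ∧ (∫ y : ℝ, (φ y)^2) = 1 ∧
      E = (∫ y : ℝ, (deriv φ y)^2) + ∫ y : ℝ, qExt b y * (φ y)^2 }

/-- `λ(M,t)`: the infimum of the Rayleigh quotient for the shear flow. -/
def lambdaVal (ν M γ₀ γ₁ γ₂ t : ℝ) : ℝ := sInf (lambdaSet (shearFlow ν M γ₀ γ₁ γ₂ t))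

/-- `c` is an eigenvalue of the Rayleigh operator `R_{b,k} = b·Id − b''·(∂_y² − k²)⁻¹`:
there are `ω ∈ L²(ℝ,ℂ)`, `ω ≠ 0`, and a `C²` stream function `ψ` with
`ψ, ψ', ψ'' ∈ L²`, such that `ψ'' − k²ψ = ω` everywhere and
`(b − c)·ω = b''·ψ` almost everywhere. -/
def IsRayleighEigenvalue (b : ℝ → ℝ) (k : ℝ) (c : ℂ) : Prop :=
  ∃ ω ψ : ℝ → ℂ,
    MemLp ω 2 (volume : Measure ℝ) ∧ ¬ (ω =ᵐ[(volume : Measure ℝ)] (0 : ℝ → ℂ)) ∧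
    ContDiff ℝ 2 ψ ∧ MemLp ψ 2 (volume : Measure ℝ) ∧
    MemLp (deriv ψ) 2 (volume : Measure ℝ) ∧ MemLp (deriv (deriv ψ)) 2 (volume : Measure ℝ) ∧
    (∀ y : ℝ, deriv (deriv ψ) y - (k:ℂ)^2 * ψ y = ω y) ∧
    (∀ᵐ y : ℝ ∂(volume : Measure ℝ),
      ((b y : ℂ) - c) * ω y = ((deriv (deriv b) y : ℝ) : ℂ) * ψ y)

/-! Set `A = 4νt + γ₀²` and `B = 4νt + γ₀²γ₁²`, the widths of the two Gaussians in `∂_y b`.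
Since `B ≤ A` and `γ₁² A ≤ B`, the scaled narrow Gaussian stays below the wide one:
`γ₁^k e^{-y²/B} / √B^k ≤ e^{-y²/A} / √A^k` for every `k`. With `k = 1` this makes the integrand
of `b(t,y) - y` nonnegative, so `b(t,y) ≥ y`; with `k = 3` it makes the bracket in the formula
for `∂_y² b` positive, so `∂_y² b(t,y)` has the sign of `-y`. As `b(t,·)` is odd, `b(t,y)` has
the sign of `y`, and `b''/b < 0` off the origin. -/

theorem intervalIntegral.integral_zero_neg_of_even {E : Type*} [NormedAddCommGroup E]
    [NormedSpace ℝ E] {f : ℝ → E} (hf : f.Even) (y : ℝ) :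
    ∫ z in (0:ℝ)..-y, f z = -∫ z in (0:ℝ)..y, f z := by
  calc ∫ z in (0:ℝ)..-y, f z = ∫ z in (0:ℝ)..-y, f (-z) := by simp only [hf.eq]
    _ = -∫ z in (0:ℝ)..y, f z := by
      rw [intervalIntegral.integral_comp_neg, neg_neg, neg_zero, intervalIntegral.integral_symm]

theorem Function.Odd.div_self_pos {f : ℝ → ℝ} (hf : f.Odd) (hpos : ∀ y, 0 < y → 0 < f y)
    {y : ℝ} (hy : y ≠ 0) : 0 < y / f y := by
  rcases hy.lt_or_gt with hneg | hpos'
  · have h := hpos (-y) (neg_pos.2 hneg)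
    rw [hf] at h
    exact div_pos_of_neg_of_neg hneg (neg_pos.1 h)
  · exact div_pos hpos' (hpos y hpos')

-- For `A ≤ 0` both sides are junk zeros, since `√A = 0`.
theorem Real.inv_sqrt_mul_inv (A : ℝ) : (√A)⁻¹ * A⁻¹ = (√A ^ 3)⁻¹ := by
  rcases le_or_gt A 0 with hA | hA
  · simp [sqrt_eq_zero'.2 hA]
  · rw [pow_succ, sq_sqrt hA.le, mul_inv, mul_comm]

theorem Real.hasDerivAt_exp_neg_sq_div (s y : ℝ) :
    HasDerivAt (fun z => exp (-z ^ 2 / s)) (-(2 * y) / s * exp (-y ^ 2 / s)) y := by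
  have h := ((hasDerivAt_pow 2 y).neg.div_const s).exp
  simp only [Nat.cast_ofNat, Pi.neg_apply] at h
  rw [mul_comm]
  convert h using 3
  norm_num

section HeatKernelComparison

variable {a c γ : ℝ}

theorem Real.exp_neg_sq_div_le_of_le {A B : ℝ} (hB : 0 < B) (hBA : B ≤ A) (y : ℝ) :
    exp (-y ^ 2 / B) ≤ exp (-y ^ 2 / A) := by
  rw [exp_le_exp, neg_div, neg_div, neg_le_neg_iff]
  exact div_le_div_of_nonneg_left (sq_nonneg y) hB hBA

theorem Real.mul_sqrt_le_sqrt {A B : ℝ} (hγ : 0 ≤ γ) (h : γ ^ 2 * A ≤ B) : γ * √A ≤ √B := by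
  rw [← sqrt_sq hγ, ← sqrt_mul (sq_nonneg γ)]
  exact sqrt_le_sqrt h

theorem pow_mul_exp_div_sqrt_pow_le (ha : 0 ≤ a) (hc : 0 < c) (hγ : γ ∈ Ioc 0 1) (k : ℕ)
    (y : ℝ) :
    γ ^ k * exp (-y ^ 2 / (a + c * γ ^ 2)) / √(a + c * γ ^ 2) ^ k
      ≤ exp (-y ^ 2 / (a + c)) / √(a + c) ^ k := by
  obtain ⟨hγ0, hγ1⟩ := hγ
  have hsq : γ ^ 2 ≤ 1 := pow_le_one₀ hγ0.le hγ1
  have hB : 0 < a + c * γ ^ 2 := by positivity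
  have hBA : a + c * γ ^ 2 ≤ a + c := by nlinarith
  have hscale : γ ^ 2 * (a + c) ≤ a + c * γ ^ 2 := by nlinarith
  have hratio : γ / √(a + c * γ ^ 2) ≤ 1 / √(a + c) := by
    rw [div_le_div_iff₀ (sqrt_pos.2 hB) (sqrt_pos.2 (hB.trans_le hBA)), one_mul]
    exact mul_sqrt_le_sqrt hγ0.le hscale
  calc γ ^ k * exp (-y ^ 2 / (a + c * γ ^ 2)) / √(a + c * γ ^ 2) ^ k
      = (γ / √(a + c * γ ^ 2)) ^ k * exp (-y ^ 2 / (a + c * γ ^ 2)) := by ring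
    _ ≤ (1 / √(a + c)) ^ k * exp (-y ^ 2 / (a + c)) :=
      mul_le_mul (pow_le_pow_left₀ (by positivity) hratio k)
        (exp_neg_sq_div_le_of_le hB hBA y) (exp_pos _).le (by positivity)
    _ = exp (-y ^ 2 / (a + c)) / √(a + c) ^ k := by ring

theorem shearFlow_integrand_le (ha : 0 ≤ a) (hc : 0 < c) (hγ : γ ∈ Ioc 0 1) {γ₂ : ℝ}
    (hγ₂ : γ₂ < 1) (z : ℝ) :
    γ₂ * (c * γ ^ 3 / √(a + c * γ ^ 2) * exp (-z ^ 2 / (a + c * γ ^ 2)))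
      ≤ c / √(a + c) * exp (-z ^ 2 / (a + c)) := by
  have hγ0 := hγ.1
  have hcube : γ ^ 3 ≤ γ := pow_le_of_le_one hγ0.le hγ.2 (by norm_num)
  have hk := pow_mul_exp_div_sqrt_pow_le ha hc hγ 1 z
  simp only [pow_one] at hk
  calc γ₂ * (c * γ ^ 3 / √(a + c * γ ^ 2) * exp (-z ^ 2 / (a + c * γ ^ 2)))
      ≤ c * γ ^ 3 / √(a + c * γ ^ 2) * exp (-z ^ 2 / (a + c * γ ^ 2)) :=
        mul_le_of_le_one_left (by positivity) hγ₂.le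
    _ ≤ c * γ / √(a + c * γ ^ 2) * exp (-z ^ 2 / (a + c * γ ^ 2)) := by gcongr
    _ = c * (γ * exp (-z ^ 2 / (a + c * γ ^ 2)) / √(a + c * γ ^ 2)) := by ring
    _ ≤ c * (exp (-z ^ 2 / (a + c)) / √(a + c)) := mul_le_mul_of_nonneg_left hk hc.le
    _ = c / √(a + c) * exp (-z ^ 2 / (a + c)) := by ring

theorem shearFlow_bracket_pos (ha : 0 ≤ a) (hc : 0 < c) (hγ : γ ∈ Ioc 0 1) {γ₂ : ℝ}
    (hγ₂ : γ₂ < 1) (y : ℝ) :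
    0 < exp (-y ^ 2 / (a + c)) / √(a + c) ^ 3
      - γ₂ * γ ^ 3 * exp (-y ^ 2 / (a + c * γ ^ 2)) / √(a + c * γ ^ 2) ^ 3 := by
  have hγ0 := hγ.1
  have hX : 0 < γ ^ 3 * exp (-y ^ 2 / (a + c * γ ^ 2)) / √(a + c * γ ^ 2) ^ 3 := by positivity
  rw [sub_pos, mul_assoc, mul_div_assoc]
  exact (mul_lt_of_lt_one_left hX hγ₂).trans_le (pow_mul_exp_div_sqrt_pow_le ha hc hγ 3 y)

end HeatKernelComparison

section ShearFlow

variable (ν M γ₀ γ₁ γ₂ t : ℝ)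

theorem shearFlow_odd : (shearFlow ν M γ₀ γ₁ γ₂ t).Odd := by
  intro y
  have heven (c s : ℝ) : (fun z : ℝ => c * exp (-z ^ 2 / s)).Even := fun z => by
    simp only [neg_sq]
  simp only [shearFlow, intervalIntegral.integral_zero_neg_of_even (heven _ _)]
  ring

theorem deriv_shearFlow :
    deriv (shearFlow ν M γ₀ γ₁ γ₂ t) = fun y =>
      1 + M * (γ₀ ^ 2 / √(4 * ν * t + γ₀ ^ 2) * exp (-y ^ 2 / (4 * ν * t + γ₀ ^ 2))
        - γ₂ * (γ₀ ^ 2 * γ₁ ^ 3 / √(4 * ν * t + γ₀ ^ 2 * γ₁ ^ 2) *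
            exp (-y ^ 2 / (4 * ν * t + γ₀ ^ 2 * γ₁ ^ 2)))) := by
  funext y
  have hA := (Continuous.integral_hasStrictDerivAt (f := fun z =>
    γ₀ ^ 2 / √(4 * ν * t + γ₀ ^ 2) * exp (-z ^ 2 / (4 * ν * t + γ₀ ^ 2))) (by fun_prop) 0 y)
  have hB := (Continuous.integral_hasStrictDerivAt (f := fun z =>
    γ₀ ^ 2 * γ₁ ^ 3 / √(4 * ν * t + γ₀ ^ 2 * γ₁ ^ 2) *
      exp (-z ^ 2 / (4 * ν * t + γ₀ ^ 2 * γ₁ ^ 2))) (by fun_prop) 0 y)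
  exact ((hasDerivAt_id y).add
    ((hA.hasDerivAt.sub (hB.hasDerivAt.const_mul γ₂)).const_mul M)).deriv

theorem deriv_deriv_shearFlow (y : ℝ) :
    deriv (deriv (shearFlow ν M γ₀ γ₁ γ₂ t)) y
      = -2 * y * γ₀ ^ 2 * M *
        (exp (-y ^ 2 / (4 * ν * t + γ₀ ^ 2)) / √(4 * ν * t + γ₀ ^ 2) ^ 3
          - γ₂ * γ₁ ^ 3 * exp (-y ^ 2 / (4 * ν * t + γ₀ ^ 2 * γ₁ ^ 2))
              / √(4 * ν * t + γ₀ ^ 2 * γ₁ ^ 2) ^ 3) := by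
  rw [deriv_shearFlow]
  set A := 4 * ν * t + γ₀ ^ 2
  set B := 4 * ν * t + γ₀ ^ 2 * γ₁ ^ 2
  have h := ((((hasDerivAt_exp_neg_sq_div A y).const_mul (γ₀ ^ 2 / √A)).sub
    (((hasDerivAt_exp_neg_sq_div B y).const_mul (γ₀ ^ 2 * γ₁ ^ 3 / √B)).const_mul γ₂)).const_mul
      M).const_add 1
  refine h.deriv.trans ?_
  simp only [div_eq_mul_inv]
  linear_combination (-2 * y * γ₀ ^ 2 * M * exp (-y ^ 2 * A⁻¹)) * inv_sqrt_mul_inv A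
    + (2 * y * γ₀ ^ 2 * γ₁ ^ 3 * γ₂ * M * exp (-y ^ 2 * B⁻¹)) * inv_sqrt_mul_inv B

variable {ν M γ₀ γ₁ γ₂ t} in
theorem le_shearFlow (hν : 0 ≤ ν) (ht : 0 ≤ t) (hM : 0 ≤ M) (hγ₀ : γ₀ ≠ 0)
    (hγ₁ : γ₁ ∈ Ioc 0 1) (hγ₂ : γ₂ < 1) {y : ℝ} (hy : 0 ≤ y) :
    y ≤ shearFlow ν M γ₀ γ₁ γ₂ t y := by
  have hle := shearFlow_integrand_le (a := 4 * ν * t) (c := γ₀ ^ 2) (by positivity)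
    (by positivity) hγ₁ hγ₂
  have hint : 0 ≤ (∫ z in (0:ℝ)..y,
        γ₀ ^ 2 / √(4 * ν * t + γ₀ ^ 2) * exp (-z ^ 2 / (4 * ν * t + γ₀ ^ 2)))
      - γ₂ * ∫ z in (0:ℝ)..y, γ₀ ^ 2 * γ₁ ^ 3 / √(4 * ν * t + γ₀ ^ 2 * γ₁ ^ 2) *
        exp (-z ^ 2 / (4 * ν * t + γ₀ ^ 2 * γ₁ ^ 2)) := by
    rw [← intervalIntegral.integral_const_mul, ← intervalIntegral.integral_sub
      (Continuous.intervalIntegrable (by fun_prop) 0 y)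
      (Continuous.intervalIntegrable (by fun_prop) 0 y)]
    exact intervalIntegral.integral_nonneg hy fun z _ => sub_nonneg.2 (hle z)
  exact le_add_of_nonneg_right (mul_nonneg hM hint)

variable {ν M γ₀ γ₁ γ₂ t} in
theorem exists_pos_deriv_deriv_shearFlow_eq_neg_mul (hν : 0 ≤ ν) (ht : 0 ≤ t) (hM : 0 < M)
    (hγ₀ : γ₀ ≠ 0) (hγ₁ : γ₁ ∈ Ioc 0 1) (hγ₂ : γ₂ < 1) :
    ∃ κ : ℝ → ℝ, (∀ y, 0 < κ y) ∧ ∀ y, deriv (deriv (shearFlow ν M γ₀ γ₁ γ₂ t)) y = -κ y * y := by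
  refine ⟨fun y => 2 * γ₀ ^ 2 * M *
    (exp (-y ^ 2 / (4 * ν * t + γ₀ ^ 2)) / √(4 * ν * t + γ₀ ^ 2) ^ 3
      - γ₂ * γ₁ ^ 3 * exp (-y ^ 2 / (4 * ν * t + γ₀ ^ 2 * γ₁ ^ 2))
        / √(4 * ν * t + γ₀ ^ 2 * γ₁ ^ 2) ^ 3), fun y => ?_, fun y => ?_⟩
  · have hbracket := shearFlow_bracket_pos (a := 4 * ν * t) (c := γ₀ ^ 2) (by positivity) (by positivity)
      hγ₁ hγ₂ y
    positivity
  · rw [deriv_deriv_shearFlow]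
    ring

end ShearFlow

/-- structural sign properties of the shear flow, Section 2.
For all admissible parameters and `t ≥ 0`: (i) `b(t,·)` is odd; (ii) `∂_y² b` has the
stated explicit Gaussian form; (iii) `b(t,y) > 0` and `∂_y² b(t,y) < 0` for `y > 0`;
consequently `y = 0` is the only inflection point (`b''` vanishes only at `0`) and
`b''(t,y)/b(t,y) < 0` for every `y ≠ 0`. -/
theorem shearFlow_sign_properties (ν M γ₀ γ₁ γ₂ t : ℝ) (hν : 0 < ν) (hM : 0 < M)
    (hγ₀ : 0 < γ₀) (hγ₁ : γ₁ ∈ Set.Ioc (0:ℝ) 1) (hγ₂ : γ₂ ∈ Set.Ioo (0:ℝ) 1)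
    (ht : 0 ≤ t) :
    (∀ y : ℝ, shearFlow ν M γ₀ γ₁ γ₂ t (-y) = -(shearFlow ν M γ₀ γ₁ γ₂ t y)) ∧
    (∀ y : ℝ, deriv (deriv (shearFlow ν M γ₀ γ₁ γ₂ t)) y
      = -2 * y * γ₀^2 * M *
        (Real.exp (-y^2 / (4*ν*t + γ₀^2)) / (Real.sqrt (4*ν*t + γ₀^2))^3
          - γ₂ * γ₁^3 * Real.exp (-y^2 / (4*ν*t + γ₀^2*γ₁^2))
              / (Real.sqrt (4*ν*t + γ₀^2*γ₁^2))^3)) ∧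
    (∀ y : ℝ, 0 < y → 0 < shearFlow ν M γ₀ γ₁ γ₂ t y ∧
      deriv (deriv (shearFlow ν M γ₀ γ₁ γ₂ t)) y < 0) ∧
    deriv (deriv (shearFlow ν M γ₀ γ₁ γ₂ t)) 0 = 0 ∧
    (∀ y : ℝ, y ≠ 0 → deriv (deriv (shearFlow ν M γ₀ γ₁ γ₂ t)) y ≠ 0) ∧
    (∀ y : ℝ, y ≠ 0 →
      deriv (deriv (shearFlow ν M γ₀ γ₁ γ₂ t)) y / shearFlow ν M γ₀ γ₁ γ₂ t y < 0) := by
  have hodd := shearFlow_odd ν M γ₀ γ₁ γ₂ t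
  have hpos (y : ℝ) (hy : 0 < y) : 0 < shearFlow ν M γ₀ γ₁ γ₂ t y :=
    hy.trans_le (le_shearFlow hν.le ht hM.le hγ₀.ne' hγ₁ hγ₂.2 hy.le)
  obtain ⟨κ, hκ, hb''⟩ :=
    exists_pos_deriv_deriv_shearFlow_eq_neg_mul hν.le ht hM hγ₀.ne' hγ₁ hγ₂.2
  refine ⟨hodd, deriv_deriv_shearFlow ν M γ₀ γ₁ γ₂ t, fun y hy => ⟨hpos y hy, ?_⟩,
    by simp [hb''], fun y hy => ?_, fun y hy => ?_⟩
  · rw [hb'']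
    exact mul_neg_of_neg_of_pos (neg_neg_of_pos (hκ y)) hy
  · rw [hb'']
    exact mul_ne_zero (neg_ne_zero.2 (hκ y).ne') hy
  · rw [hb'', mul_div_assoc]
    exact mul_neg_of_neg_of_pos (neg_neg_of_pos (hκ y)) (hodd.div_self_pos hpos hy)
end
end

section
/- There exists a constant C > 0 such that for all ν > 0, M > 0, γ₀ ∈ (0,1), γ₁ ∈ (0,1], γ₂ ∈ (0,1), t ≥ 0, and every y ∈ ℝ with y ≠ 0: | b''(0,y)·( b(t,y) − b(0,y) ) / ( b(t,y)·b(0,y) ) | ≤ C·(1+M²)·(νt/γ₀²)·exp(−y²/γ₀²), where b'' denotes ∂_y² b. (The left-hand side also extends continuously to y = 0 with the same bound.) -/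
open MeasureTheory Real Filter Set

noncomputable section

/-!
Since `b(t,0) = 0`, the mean value theorem writes `b(t,y) = y·Q_t(y)` where `Q_t(y)` is a value
of `∂_y b(t,·) ≥ 1`, and `b(t,y) - b(0,y) = y·D(y)` where `D(y)` is a value of
`∂_y b(t,·) - ∂_y b(0,·) = O(M νt/γ₀)`: moving a Gaussian of width `r` to width `√(4νt + r²)`
changes it by at most its amplitude times `4νt/r³`. Moreover `b''(0,y) = y·p(y)` with
`|p(y)| ≤ (2M/γ₀) e^{-y²/γ₀²}`. The powers of `y` cancel, leaving the continuous function
`p·D/(Q_t Q_0)`, bounded by `16 M² (νt/γ₀²) e^{-y²/γ₀²}`.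
-/
section DSlope

variable {f g p : ℝ → ℝ}

theorem Differentiable.continuous_dslope (hf : Differentiable ℝ f) (a : ℝ) :
    Continuous (dslope f a) := by
  refine continuous_iff_continuousAt.2 fun b => ?_
  rcases eq_or_ne b a with rfl | hb
  · exact continuousAt_dslope_same.2 (hf b)
  · exact (continuousAt_dslope_of_ne hb).2 (hf b).continuousAt

theorem exists_dslope_eq_deriv (hf : Differentiable ℝ f) (a b : ℝ) :
    ∃ c, dslope f a b = deriv f c := by
  rcases lt_trichotomy a b with hab | rfl | hab
  · obtain ⟨c, -, hc⟩ := exists_deriv_eq_slope' f hab hf.continuous.continuousOn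
      hf.differentiableOn
    exact ⟨c, by rw [dslope_of_ne f hab.ne', hc]⟩
  · exact ⟨a, dslope_same f a⟩
  · obtain ⟨c, -, hc⟩ := exists_deriv_eq_slope' f hab hf.continuous.continuousOn
      hf.differentiableOn
    exact ⟨c, by rw [dslope_of_ne f hab.ne, hc, slope_comm]⟩

/-- Dividing numerator and denominator by `y²` turns the quotient into
`p · dslope (f - g) 0 / (dslope f 0 · dslope g 0)`, with denominator at least `1`. -/
theorem exists_continuous_extension_mul_sub_div_mul (hf : Differentiable ℝ f)
    (hg : Differentiable ℝ g) (hf0 : f 0 = 0) (hg0 : g 0 = 0) (hf1 : ∀ x, 1 ≤ deriv f x)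
    (hg1 : ∀ x, 1 ≤ deriv g x) {δ : ℝ} (hfg : ∀ x, |deriv f x - deriv g x| ≤ δ)
    (hp : Continuous p) :
    ∃ G : ℝ → ℝ, Continuous G ∧
      (∀ y ≠ 0, G y = y * p y * (f y - g y) / (f y * g y)) ∧ ∀ y, |G y| ≤ |p y| * δ := by
  have hf_slope (y : ℝ) : 1 ≤ dslope f 0 y := by
    obtain ⟨c, hc⟩ := exists_dslope_eq_deriv hf 0 y
    exact hc ▸ hf1 c
  have hg_slope (y : ℝ) : 1 ≤ dslope g 0 y := by
    obtain ⟨c, hc⟩ := exists_dslope_eq_deriv hg 0 y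
    exact hc ▸ hg1 c
  have hfg_slope (y : ℝ) : |dslope (f - g) 0 y| ≤ δ := by
    obtain ⟨c, hc⟩ := exists_dslope_eq_deriv (hf.sub hg) 0 y
    rw [hc, deriv_sub (hf c) (hg c)]
    exact hfg c
  have hden (y : ℝ) : 1 ≤ dslope f 0 y * dslope g 0 y := by
    nlinarith [hf_slope y, hg_slope y]
  refine ⟨fun y => p y * dslope (f - g) 0 y / (dslope f 0 y * dslope g 0 y), ?_, ?_, ?_⟩
  · exact (hp.mul ((hf.sub hg).continuous_dslope 0)).div
      ((hf.continuous_dslope 0).mul (hg.continuous_dslope 0))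
      fun y => (zero_lt_one.trans_le (hden y)).ne'
  · intro y hy
    have hslope (h : ℝ → ℝ) (h0 : h 0 = 0) : dslope h 0 y = h y / y := by
      rw [dslope_of_ne h hy, slope_def_field, h0, sub_zero, sub_zero]
    have hfy : f y ≠ 0 := fun h => absurd (hf_slope y) (by simp [hslope f hf0, h])
    have hgy : g y ≠ 0 := fun h => absurd (hg_slope y) (by simp [hslope g hg0, h])
    simp only [hslope f hf0, hslope g hg0, hslope (f - g) (by simp [hf0, hg0]), Pi.sub_apply]
    field_simp
  · intro y
    rw [abs_div, abs_mul, abs_of_pos (zero_lt_one.trans_le (hden y))]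
    calc |p y| * |dslope (f - g) 0 y| / (dslope f 0 y * dslope g 0 y)
        ≤ |p y| * |dslope (f - g) 0 y| :=
          div_le_self (by positivity) (hden y)
      _ ≤ |p y| * δ := mul_le_mul_of_nonneg_left (hfg_slope y) (abs_nonneg _)

end DSlope

def gaussBump (c s z : ℝ) : ℝ := c / √s * exp (-z ^ 2 / s)

theorem continuous_gaussBump (c s : ℝ) : Continuous (gaussBump c s) := by
  unfold gaussBump; fun_prop

theorem gaussBump_nonneg {c : ℝ} (hc : 0 ≤ c) (s z : ℝ) : 0 ≤ gaussBump c s z := by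
  unfold gaussBump; positivity

theorem hasDerivAt_gaussBump (c s z : ℝ) :
    HasDerivAt (gaussBump c s) (-(2 * z / s) * gaussBump c s z) z := by
  have h : HasDerivAt (fun z : ℝ => -z ^ 2 / s) (-(2 * z / s)) z := by
    simpa [neg_div] using (hasDerivAt_pow 2 z).fun_neg.div_const s
  have hderiv : -(2 * z / s) * gaussBump c s z = c / √s * (exp (-z ^ 2 / s) * -(2 * z / s)) := by
    rw [gaussBump]; ring
  exact hderiv ▸ h.exp.const_mul (c / √s)

theorem gaussBump_le_gaussBump {c₁ c₂ s₁ s₂ : ℝ} (hc₁ : 0 ≤ c₁) (hc₂ : 0 ≤ c₂) (hs₂ : 0 < s₂)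
    (hs : s₂ ≤ s₁) (hc : c₂ ^ 2 * s₁ ≤ c₁ ^ 2 * s₂) (z : ℝ) :
    gaussBump c₂ s₂ z ≤ gaussBump c₁ s₁ z := by
  have hs₁ : 0 < s₁ := hs₂.trans_le hs
  have hamp : c₂ / √s₂ ≤ c₁ / √s₁ := by
    rw [div_le_div_iff₀ (sqrt_pos.2 hs₂) (sqrt_pos.2 hs₁)]
    refine (pow_le_pow_iff_left₀ (by positivity) (by positivity) two_ne_zero).1 ?_
    rwa [mul_pow, mul_pow, sq_sqrt hs₁.le, sq_sqrt hs₂.le]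
  have hexp : exp (-z ^ 2 / s₂) ≤ exp (-z ^ 2 / s₁) := by
    gcongr exp ?_
    rw [neg_div, neg_div, neg_le_neg_iff]
    exact div_le_div_of_nonneg_left (sq_nonneg z) hs₂ hs
  exact mul_le_mul hamp hexp (exp_pos _).le (by positivity)

theorem inv_sub_inv_sqrt_add_sq_le {r T : ℝ} (hr : 0 < r) (hT : 0 ≤ T) :
    r⁻¹ - (√(T + r ^ 2))⁻¹ ≤ T / (2 * r ^ 3) := by
  set u := √(T + r ^ 2)
  have hu2 : u ^ 2 = T + r ^ 2 := sq_sqrt (by positivity)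
  have hru : r ≤ u := le_sqrt_of_sq_le (by linarith)
  have hu : 0 < u := hr.trans_le hru
  rw [inv_sub_inv hr.ne' hu.ne', div_le_div_iff₀ (by positivity) (by positivity)]
  have hT : T = (u - r) * (u + r) := by linear_combination -hu2
  rw [hT]
  nlinarith [mul_nonneg (mul_nonneg (sq_nonneg (u - r)) hr.le) (by positivity : 0 ≤ u + 2 * r)]

-- `e^{-x} (1 - e^{-kx}) ≤ e^{-x} · kx ≤ k`, as `x e^{-x} ≤ 1`.
theorem exp_neg_sub_exp_neg_one_add_mul_le (x : ℝ) {k : ℝ} (hk : 0 ≤ k) :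
    exp (-x) - exp (-((1 + k) * x)) ≤ k := by
  have hkx : 1 - exp (-(k * x)) ≤ k * x := by linarith [add_one_le_exp (-(k * x))]
  have hxe : x * exp (-x) ≤ 1 := by
    rw [exp_neg, mul_inv_le_iff₀ (exp_pos x), one_mul]
    linarith [add_one_le_exp x]
  calc exp (-x) - exp (-((1 + k) * x)) = exp (-x) * (1 - exp (-(k * x))) := by
        rw [mul_sub, mul_one, ← exp_add]; ring_nf
    _ ≤ exp (-x) * (k * x) := by gcongr
    _ = k * (x * exp (-x)) := by ring
    _ ≤ k := mul_le_of_le_one_right hk hxe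

theorem abs_gaussBump_add_sq_sub_le {c r T : ℝ} (hc : 0 ≤ c) (hr : 0 < r) (hT : 0 ≤ T) (z : ℝ) :
    |gaussBump c (T + r ^ 2) z - gaussBump c (r ^ 2) z| ≤ c * T / r ^ 3 := by
  set e₁ := exp (-z ^ 2 / (T + r ^ 2))
  set e₂ := exp (-z ^ 2 / r ^ 2)
  have he₁ : e₁ ≤ 1 :=
    exp_le_one_iff.2 (div_nonpos_of_nonpos_of_nonneg (neg_nonpos.2 (sq_nonneg z)) (by positivity))
  have he : e₁ - e₂ ≤ T / r ^ 2 := by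
    have h := exp_neg_sub_exp_neg_one_add_mul_le (z ^ 2 / (T + r ^ 2))
      (by positivity : 0 ≤ T / r ^ 2)
    rwa [show (1 + T / r ^ 2) * (z ^ 2 / (T + r ^ 2)) = z ^ 2 / r ^ 2 by field_simp; ring,
      ← neg_div, ← neg_div] at h
  have he₂ : e₂ ≤ e₁ := by
    refine exp_le_exp.2 ?_
    rw [neg_div, neg_div, neg_le_neg_iff]
    exact div_le_div_of_nonneg_left (sq_nonneg z) (by positivity) (by linarith)
  have hA := inv_sub_inv_sqrt_add_sq_le hr hT
  have hA₀ : 0 ≤ r⁻¹ - (√(T + r ^ 2))⁻¹ :=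
    sub_nonneg.2 (inv_anti₀ hr (le_sqrt_of_sq_le (by linarith)))
  have hsplit : gaussBump c (T + r ^ 2) z - gaussBump c (r ^ 2) z
      = c * r⁻¹ * (e₁ - e₂) - c * (r⁻¹ - (√(T + r ^ 2))⁻¹) * e₁ := by
    simp only [gaussBump, sqrt_sq hr.le, e₁, e₂]; ring
  have h₁ : c * r⁻¹ * (e₁ - e₂) ≤ c * T / r ^ 3 := by
    calc c * r⁻¹ * (e₁ - e₂) ≤ c * r⁻¹ * (T / r ^ 2) := by gcongr
      _ = c * T / r ^ 3 := by field_simp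
  have h₂ : c * (r⁻¹ - (√(T + r ^ 2))⁻¹) * e₁ ≤ c * T / r ^ 3 := by
    calc c * (r⁻¹ - (√(T + r ^ 2))⁻¹) * e₁ ≤ c * (T / (2 * r ^ 3)) * 1 := by gcongr
      _ = c * T / r ^ 3 / 2 := by ring
      _ ≤ c * T / r ^ 3 := half_le_self (by positivity)
  have h₁₀ : 0 ≤ c * r⁻¹ * (e₁ - e₂) := by have := sub_nonneg.2 he₂; positivity
  have h₂₀ : 0 ≤ c * (r⁻¹ - (√(T + r ^ 2))⁻¹) * e₁ := by positivity
  rw [hsplit, abs_le]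
  constructor <;> linarith

def shearFlowDeriv (ν M γ₀ γ₁ γ₂ t z : ℝ) : ℝ :=
  1 + M * (gaussBump (γ₀ ^ 2) (4 * ν * t + γ₀ ^ 2) z
    - γ₂ * gaussBump (γ₀ ^ 2 * γ₁ ^ 3) (4 * ν * t + γ₀ ^ 2 * γ₁ ^ 2) z)

section ShearFlow

variable {ν M γ₀ γ₁ γ₂ t : ℝ}

theorem hasDerivAt_shearFlow (ν M γ₀ γ₁ γ₂ t y : ℝ) :
    HasDerivAt (shearFlow ν M γ₀ γ₁ γ₂ t) (shearFlowDeriv ν M γ₀ γ₁ γ₂ t y) y := by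
  have hprim (c s : ℝ) : HasDerivAt (fun u => ∫ z in (0 : ℝ)..u, gaussBump c s z)
      (gaussBump c s y) y :=
    (continuous_gaussBump c s).integral_hasStrictDerivAt 0 y |>.hasDerivAt
  exact (hasDerivAt_id y).add
    (((hprim _ _).sub ((hprim _ _).const_mul γ₂)).const_mul M)

theorem deriv_shearFlow_s17 (ν M γ₀ γ₁ γ₂ t : ℝ) :
    deriv (shearFlow ν M γ₀ γ₁ γ₂ t) = shearFlowDeriv ν M γ₀ γ₁ γ₂ t :=
  funext fun y => (hasDerivAt_shearFlow ν M γ₀ γ₁ γ₂ t y).deriv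

theorem differentiable_shearFlow (ν M γ₀ γ₁ γ₂ t : ℝ) :
    Differentiable ℝ (shearFlow ν M γ₀ γ₁ γ₂ t) :=
  fun y => (hasDerivAt_shearFlow ν M γ₀ γ₁ γ₂ t y).differentiableAt

@[simp]
theorem shearFlow_apply_zero (ν M γ₀ γ₁ γ₂ t : ℝ) : shearFlow ν M γ₀ γ₁ γ₂ t 0 = 0 := by
  simp [shearFlow]

theorem one_le_shearFlowDeriv (hν : 0 ≤ ν) (hM : 0 ≤ M) (hγ₀ : 0 < γ₀) (hγ₁ : 0 < γ₁)
    (hγ₁' : γ₁ ≤ 1) (hγ₂ : γ₂ ≤ 1) (ht : 0 ≤ t) (z : ℝ) :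
    1 ≤ shearFlowDeriv ν M γ₀ γ₁ γ₂ t z := by
  have h₆ : γ₁ ^ 6 ≤ γ₁ ^ 2 := pow_le_pow_of_le_one hγ₁.le hγ₁' (by norm_num)
  have h₆' : γ₁ ^ 6 ≤ 1 := pow_le_one₀ hγ₁.le hγ₁'
  have h₂ : γ₁ ^ 2 ≤ 1 := pow_le_one₀ hγ₁.le hγ₁'
  have hνt : 0 ≤ 4 * ν * t := by positivity
  have hbump : γ₂ * gaussBump (γ₀ ^ 2 * γ₁ ^ 3) (4 * ν * t + γ₀ ^ 2 * γ₁ ^ 2) z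
      ≤ gaussBump (γ₀ ^ 2) (4 * ν * t + γ₀ ^ 2) z := by
    refine (mul_le_of_le_one_left (gaussBump_nonneg (by positivity) _ _) hγ₂).trans ?_
    refine gaussBump_le_gaussBump (by positivity) (by positivity) (by positivity)
      (by nlinarith [mul_le_mul_of_nonneg_left h₂ (sq_nonneg γ₀)]) ?_ z
    nlinarith [mul_le_mul_of_nonneg_right h₆' hνt, mul_le_mul_of_nonneg_right h₆ (sq_nonneg γ₀)]
  unfold shearFlowDeriv
  nlinarith [mul_nonneg hM (sub_nonneg.2 hbump)]

theorem abs_shearFlowDeriv_sub_le (hν : 0 ≤ ν) (hM : 0 ≤ M) (hγ₀ : 0 < γ₀) (hγ₁ : 0 < γ₁)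
    (hγ₂ : |γ₂| ≤ 1) (ht : 0 ≤ t) (z : ℝ) :
    |shearFlowDeriv ν M γ₀ γ₁ γ₂ t z - shearFlowDeriv ν M γ₀ γ₁ γ₂ 0 z| ≤ 8 * M * ν * t / γ₀ := by
  have hνt : 0 ≤ 4 * ν * t := by positivity
  have h₁ := abs_gaussBump_add_sq_sub_le (c := γ₀ ^ 2) (by positivity) hγ₀ hνt z
  have h₂ := abs_gaussBump_add_sq_sub_le (c := γ₀ ^ 2 * γ₁ ^ 3) (by positivity)
    (mul_pos hγ₀ hγ₁) hνt z
  have hsplit : shearFlowDeriv ν M γ₀ γ₁ γ₂ t z - shearFlowDeriv ν M γ₀ γ₁ γ₂ 0 z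
      = M * ((gaussBump (γ₀ ^ 2) (4 * ν * t + γ₀ ^ 2) z - gaussBump (γ₀ ^ 2) (γ₀ ^ 2) z)
        - γ₂ * (gaussBump (γ₀ ^ 2 * γ₁ ^ 3) (4 * ν * t + (γ₀ * γ₁) ^ 2) z
          - gaussBump (γ₀ ^ 2 * γ₁ ^ 3) ((γ₀ * γ₁) ^ 2) z)) := by
    simp only [shearFlowDeriv, mul_pow, mul_zero, zero_add]; ring
  have hc₁ : γ₀ ^ 2 * (4 * ν * t) / γ₀ ^ 3 = 4 * ν * t / γ₀ := by field_simp
  have hc₂ : γ₀ ^ 2 * γ₁ ^ 3 * (4 * ν * t) / (γ₀ * γ₁) ^ 3 = 4 * ν * t / γ₀ := by field_simp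
  rw [hc₁] at h₁
  rw [hc₂] at h₂
  rw [hsplit, abs_mul, abs_of_nonneg hM]
  calc M * |_ - γ₂ * _| ≤ M * (4 * ν * t / γ₀ + 1 * (4 * ν * t / γ₀)) := by
        gcongr
        refine (abs_sub _ _).trans (add_le_add h₁ ?_)
        rw [abs_mul]
        exact mul_le_mul hγ₂ h₂ (abs_nonneg _) zero_le_one
    _ = 8 * M * ν * t / γ₀ := by ring

theorem deriv_deriv_shearFlow_zero (hγ₀ : 0 < γ₀) (hγ₁ : 0 < γ₁) (y : ℝ) :
    deriv (deriv (shearFlow ν M γ₀ γ₁ γ₂ 0)) y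
      = y * (-(2 * M / γ₀) * (exp (-y ^ 2 / γ₀ ^ 2) - γ₂ * exp (-y ^ 2 / (γ₀ ^ 2 * γ₁ ^ 2)))) := by
  have h := ((hasDerivAt_gaussBump (γ₀ ^ 2) (4 * ν * 0 + γ₀ ^ 2) y).sub
    ((hasDerivAt_gaussBump (γ₀ ^ 2 * γ₁ ^ 3) (4 * ν * 0 + γ₀ ^ 2 * γ₁ ^ 2) y).const_mul γ₂))
    |>.const_mul M |>.const_add 1
  rw [deriv_shearFlow_s17, (show HasDerivAt (shearFlowDeriv ν M γ₀ γ₁ γ₂ 0) _ y from h).deriv]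
  have hs : √(γ₀ ^ 2 * γ₁ ^ 2) = γ₀ * γ₁ := by rw [← mul_pow, sqrt_sq (by positivity)]
  simp only [gaussBump, mul_zero, zero_add, sqrt_sq hγ₀.le, hs]
  field_simp
  ring

theorem abs_exp_neg_div_sub_mul_exp_le (hγ₀ : 0 < γ₀) (hγ₁ : 0 < γ₁) (hγ₁' : γ₁ ≤ 1)
    (hγ₂ : 0 ≤ γ₂) (hγ₂' : γ₂ ≤ 1) (y : ℝ) :
    |exp (-y ^ 2 / γ₀ ^ 2) - γ₂ * exp (-y ^ 2 / (γ₀ ^ 2 * γ₁ ^ 2))| ≤ exp (-y ^ 2 / γ₀ ^ 2) := by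
  have hle : exp (-y ^ 2 / (γ₀ ^ 2 * γ₁ ^ 2)) ≤ exp (-y ^ 2 / γ₀ ^ 2) := by
    refine exp_le_exp.2 ?_
    rw [neg_div, neg_div, neg_le_neg_iff]
    exact div_le_div_of_nonneg_left (sq_nonneg y) (by positivity)
      (mul_le_of_le_one_right (by positivity) (pow_le_one₀ hγ₁.le hγ₁'))
  have h₀ : 0 ≤ γ₂ * exp (-y ^ 2 / (γ₀ ^ 2 * γ₁ ^ 2)) := by positivity
  have h₁ : γ₂ * exp (-y ^ 2 / (γ₀ ^ 2 * γ₁ ^ 2)) ≤ exp (-y ^ 2 / γ₀ ^ 2) :=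
    (mul_le_of_le_one_left (exp_pos _).le hγ₂').trans hle
  rw [abs_le]
  constructor <;> linarith [exp_pos (-y ^ 2 / γ₀ ^ 2)]

end ShearFlow

/-- pointwise estimate of the error term `B₃`, proof of
Proposition 2.4. There is `C > 0` such that for all admissible parameters and all
`y ≠ 0`, `|b''(0,y)·(b(t,y) − b(0,y))/(b(t,y)·b(0,y))| ≤ C·(1+M²)·(νt/γ₀²)·e^{−y²/γ₀²}`;
moreover this quantity extends continuously to `y = 0` with the same bound. -/
theorem B3_pointwise_estimate :
    ∃ C : ℝ, 0 < C ∧ ∀ ν M γ₀ γ₁ γ₂ t : ℝ, 0 < ν → 0 < M →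
      γ₀ ∈ Set.Ioo (0:ℝ) 1 → γ₁ ∈ Set.Ioc (0:ℝ) 1 → γ₂ ∈ Set.Ioo (0:ℝ) 1 → 0 ≤ t →
      (∀ y : ℝ, y ≠ 0 →
        |deriv (deriv (shearFlow ν M γ₀ γ₁ γ₂ 0)) y
            * (shearFlow ν M γ₀ γ₁ γ₂ t y - shearFlow ν M γ₀ γ₁ γ₂ 0 y)
            / (shearFlow ν M γ₀ γ₁ γ₂ t y * shearFlow ν M γ₀ γ₁ γ₂ 0 y)|
          ≤ C * (1 + M^2) * (ν * t / γ₀^2) * Real.exp (-y^2 / γ₀^2)) ∧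
      (∃ g : ℝ → ℝ, Continuous g ∧
        (∀ y : ℝ, y ≠ 0 →
          g y = deriv (deriv (shearFlow ν M γ₀ γ₁ γ₂ 0)) y
            * (shearFlow ν M γ₀ γ₁ γ₂ t y - shearFlow ν M γ₀ γ₁ γ₂ 0 y)
            / (shearFlow ν M γ₀ γ₁ γ₂ t y * shearFlow ν M γ₀ γ₁ γ₂ 0 y)) ∧
        (∀ y : ℝ, |g y| ≤ C * (1 + M^2) * (ν * t / γ₀^2) * Real.exp (-y^2 / γ₀^2))) := by
  refine ⟨16, by norm_num, fun ν M γ₀ γ₁ γ₂ t hν hM ⟨hγ₀, _⟩ ⟨hγ₁, hγ₁'⟩ ⟨hγ₂, hγ₂'⟩ ht => ?_⟩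
  set p : ℝ → ℝ := fun y =>
    -(2 * M / γ₀) * (exp (-y ^ 2 / γ₀ ^ 2) - γ₂ * exp (-y ^ 2 / (γ₀ ^ 2 * γ₁ ^ 2)))
  have hb' (s : ℝ) (hs : 0 ≤ s) (z : ℝ) : 1 ≤ deriv (shearFlow ν M γ₀ γ₁ γ₂ s) z := by
    rw [deriv_shearFlow_s17]
    exact one_le_shearFlowDeriv hν.le hM.le hγ₀ hγ₁ hγ₁' hγ₂'.le hs z
  have hdiff (z : ℝ) : |deriv (shearFlow ν M γ₀ γ₁ γ₂ t) z - deriv (shearFlow ν M γ₀ γ₁ γ₂ 0) z|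
      ≤ 8 * M * ν * t / γ₀ := by
    rw [deriv_shearFlow_s17, deriv_shearFlow_s17]
    exact abs_shearFlowDeriv_sub_le hν.le hM.le hγ₀ hγ₁ (abs_le.2 ⟨by linarith, hγ₂'.le⟩) ht z
  obtain ⟨G, hG, hGeq, hGle⟩ := exists_continuous_extension_mul_sub_div_mul (p := p)
    (differentiable_shearFlow ν M γ₀ γ₁ γ₂ t) (differentiable_shearFlow ν M γ₀ γ₁ γ₂ 0)
    (shearFlow_apply_zero ..) (shearFlow_apply_zero ..) (hb' t ht) (hb' 0 le_rfl) hdiff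
    (by fun_prop)
  have hGeq' (y : ℝ) (hy : y ≠ 0) : G y = deriv (deriv (shearFlow ν M γ₀ γ₁ γ₂ 0)) y
      * (shearFlow ν M γ₀ γ₁ γ₂ t y - shearFlow ν M γ₀ γ₁ γ₂ 0 y)
      / (shearFlow ν M γ₀ γ₁ γ₂ t y * shearFlow ν M γ₀ γ₁ γ₂ 0 y) := by
    rw [deriv_deriv_shearFlow_zero hγ₀ hγ₁, hGeq y hy]
  have hGbound (y : ℝ) : |G y| ≤ 16 * (1 + M ^ 2) * (ν * t / γ₀ ^ 2) * exp (-y ^ 2 / γ₀ ^ 2) := by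
    have hp : |p y| ≤ 2 * M / γ₀ * exp (-y ^ 2 / γ₀ ^ 2) := by
      rw [abs_mul, abs_neg, abs_of_pos (by positivity)]
      gcongr
      exact abs_exp_neg_div_sub_mul_exp_le hγ₀ hγ₁ hγ₁' hγ₂.le hγ₂'.le y
    calc |G y| ≤ |p y| * (8 * M * ν * t / γ₀) := hGle y
      _ ≤ 2 * M / γ₀ * exp (-y ^ 2 / γ₀ ^ 2) * (8 * M * ν * t / γ₀) := by gcongr
      _ = 16 * M ^ 2 * (ν * t / γ₀ ^ 2) * exp (-y ^ 2 / γ₀ ^ 2) := by ring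
      _ ≤ 16 * (1 + M ^ 2) * (ν * t / γ₀ ^ 2) * exp (-y ^ 2 / γ₀ ^ 2) := by gcongr; linarith
  exact ⟨fun y hy => hGeq' y hy ▸ hGbound y, G, hG, hGeq', hGbound⟩
end
end
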